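/- Suppose positive integers x_1,…,x_n satisfy 1/x_1 + ⋯ + 1/x_n = 1, a prime p divides at least one x_i, and α = max_i v_p(x_i) is attained exactly at indices i_1,…,i_s with s ≥ 2, with x_{i_t} = p^α x'_{i_t}, p ∤ x'_{i_t}. Then for any choice of s−1 distinct indices k_1,…,k_{s−1} among i_1,…,i_s, the (s−2)-nd elementary symmetric polynomial σ_{s−2}(x'_{k_1},…,x'_{k_{s−1}}) is not divisible by p. -/

import Mathlib

/-! Write `x i = p ^ α * y i` for `i ∈ S`. In `∑ i ∈ S, 1 / x i = 1 - ∑ i ∉ S, 1 / x i` the right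
side has `p`-adic norm at most `p ^ (α - 1)`, so `∑ i ∈ S, 1 / y i` has `p`-adic norm below `1`;
multiplying by `∏ i ∈ S, y i` shows that `p` divides `σ_{s-1}(y_S)`. Splitting off the index
`j ∈ S \ T` gives `σ_{s-1}(y_S) = ∏ i ∈ T, y i + y j * σ_{s-2}(y_T)`, whose first summand is
prime to `p`. -/

open Finset

lemma Finset.sum_powersetCard_succ_insert_prod {ι R : Type*} [DecidableEq ι] [CommSemiring R]
    {j : ι} {T : Finset ι} (hj : j ∉ T) (k : ℕ) (f : ι → R) :
    ∑ t ∈ (insert j T).powersetCard (k + 1), ∏ i ∈ t, f i =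
      ∑ t ∈ T.powersetCard (k + 1), ∏ i ∈ t, f i + f j * ∑ t ∈ T.powersetCard k, ∏ i ∈ t, f i := by
  have hjt : ∀ t ∈ T.powersetCard k, j ∉ t := fun t ht h => hj ((mem_powersetCard.1 ht).1 h)
  rw [powersetCard_succ_insert hj, sum_union, sum_image, mul_sum]
  · exact congrArg _ (sum_congr rfl fun t ht => prod_insert (hjt t ht))
  · intro u hu v hv huv
    simpa [erase_insert (hjt u hu), erase_insert (hjt v hv)] using congrArg (·.erase j) huv
  · refine disjoint_left.2 fun t ht ht' => ?_
    obtain ⟨u, -, rfl⟩ := mem_image.1 ht'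
    exact hj ((mem_powersetCard.1 ht).1 (mem_insert_self j u))

lemma Finset.sum_powersetCard_card_insert_prod {ι R : Type*} [DecidableEq ι] [CommSemiring R]
    {j : ι} {T : Finset ι} (hj : j ∉ T) (hT : T.Nonempty) (f : ι → R) :
    ∑ t ∈ (insert j T).powersetCard #T, ∏ i ∈ t, f i =
      ∏ i ∈ T, f i + f j * ∑ t ∈ T.powersetCard (#T - 1), ∏ i ∈ t, f i := by
  obtain ⟨k, hk⟩ : ∃ k, #T = k + 1 := Nat.exists_eq_add_one.2 hT.card_pos
  rw [hk, sum_powersetCard_succ_insert_prod hj, ← hk, powersetCard_self, sum_singleton, hk,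
    Nat.add_sub_cancel]

lemma Finset.prod_mul_sum_inv_eq_sum_powersetCard {ι K : Type*} [Field K]
    {T : Finset ι} (hT : T.Nonempty) {f : ι → K} (hf : ∀ i ∈ T, f i ≠ 0) :
    (∏ i ∈ T, f i) * ∑ i ∈ T, (f i)⁻¹ = ∑ t ∈ T.powersetCard (#T - 1), ∏ i ∈ t, f i := by
  classical
  induction hT using Finset.Nonempty.cons_induction with
  | singleton a => simp [hf a (mem_singleton_self a)]
  | cons a T ha hT ih =>
    rw [cons_eq_insert] at hf ⊢
    rw [card_insert_of_notMem ha, Nat.add_sub_cancel, sum_powersetCard_card_insert_prod ha hT,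
      ← ih fun i hi => hf i (mem_insert_of_mem hi), prod_insert ha, sum_insert ha]
    field_simp [hf a (mem_insert_self a T)]

lemma padicNorm_inv_natCast {p : ℕ} [Fact p.Prime] {m : ℕ} (hm : m ≠ 0) :
    padicNorm p (m : ℚ)⁻¹ = (p : ℚ) ^ padicValNat p m := by
  rw [padicNorm.eq_zpow_of_nonzero (by positivity), padicValRat.inv, padicValRat.of_nat, neg_neg,
    zpow_natCast]

lemma padicNorm_pow_mul_sum_inv_lt_one {ι : Type*} [Fintype ι] {p : ℕ} [hp : Fact p.Prime]
    {x : ι → ℕ} (hx : ∀ i, x i ≠ 0) (hsum : ∑ i, (x i : ℚ)⁻¹ = 1) {α : ℕ} (hα : 0 < α)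
    (S : Finset ι) (hS : ∀ i ∉ S, padicValNat p (x i) < α) :
    padicNorm p (p ^ α * ∑ i ∈ S, (x i : ℚ)⁻¹) < 1 := by
  classical
  obtain ⟨k, rfl⟩ : ∃ k, α = k + 1 := Nat.exists_eq_add_one.2 hα
  have hp1 : 1 < (p : ℚ) := by exact_mod_cast hp.out.one_lt
  have hrest : padicNorm p (1 - ∑ i ∈ Sᶜ, (x i : ℚ)⁻¹) ≤ (p : ℚ) ^ k := by
    refine padicNorm.sub.trans (max_le ?_ ?_)
    · rw [padicNorm.one]
      exact one_le_pow₀ hp1.le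
    · refine padicNorm.sum_le' (fun i hi => ?_) (by positivity)
      rw [padicNorm_inv_natCast (hx i)]
      exact pow_le_pow_right₀ hp1.le (Nat.lt_succ_iff.1 (hS i (mem_compl.1 hi)))
  rw [eq_sub_of_add_eq ((sum_add_sum_compl S _).trans hsum), padicNorm.mul,
    IsAbsoluteValue.abv_pow (padicNorm p), padicNorm.padicNorm_p_of_prime]
  calc (p : ℚ)⁻¹ ^ (k + 1) * padicNorm p (1 - ∑ i ∈ Sᶜ, (x i : ℚ)⁻¹)
      ≤ (p : ℚ)⁻¹ ^ (k + 1) * p ^ k := by gcongr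
    _ = (p : ℚ)⁻¹ := by
      rw [pow_succ, mul_right_comm, ← mul_pow, inv_mul_cancel₀ (by positivity), one_pow, one_mul]
    _ < 1 := inv_lt_one_of_one_lt₀ hp1

lemma Nat.Prime.dvd_sum_powersetCard_card_sub_one_prod_div_pow {ι : Type*} [Fintype ι]
    {p : ℕ} (hp : p.Prime) {x : ι → ℕ} (hx : ∀ i, x i ≠ 0) (hsum : ∑ i, (x i : ℚ)⁻¹ = 1)
    {α : ℕ} (hα : 0 < α) {S : Finset ι} (hSne : S.Nonempty)
    (hSα : ∀ i ∈ S, padicValNat p (x i) = α) (hS : ∀ i ∉ S, padicValNat p (x i) < α) :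
    p ∣ ∑ t ∈ S.powersetCard (#S - 1), ∏ i ∈ t, x i / p ^ α := by
  have := Fact.mk hp
  have hcast : ∀ i ∈ S, ((x i / p ^ α : ℕ) : ℚ) = x i / p ^ α := fun i hi => by
    rw [Nat.cast_div_charZero (hSα i hi ▸ pow_padicValNat_dvd), Nat.cast_pow]
  have hy0 : ∀ i ∈ S, ((x i / p ^ α : ℕ) : ℚ) ≠ 0 := fun i hi => by
    rw [hcast i hi]
    exact div_ne_zero (Nat.cast_ne_zero.2 (hx i)) (pow_ne_zero _ (Nat.cast_ne_zero.2 hp.ne_zero))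
  have hsumS : ∑ i ∈ S, ((x i / p ^ α : ℕ) : ℚ)⁻¹ = p ^ α * ∑ i ∈ S, (x i : ℚ)⁻¹ := by
    rw [mul_sum]
    exact sum_congr rfl fun i hi => by rw [hcast i hi, inv_div, div_eq_mul_inv]
  rw [← padicNorm.nat_lt_one_iff, Nat.cast_sum]
  simp only [Nat.cast_prod]
  rw [← prod_mul_sum_inv_eq_sum_powersetCard hSne hy0, hsumS, padicNorm.mul, ← Nat.cast_prod]
  exact mul_lt_one_of_nonneg_of_lt_one_right (padicNorm.of_nat _) (padicNorm.nonneg _)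
    (padicNorm_pow_mul_sum_inv_lt_one hx hsum hα S hS)

lemma Nat.not_dvd_div_pow_padicValNat {p n : ℕ} (hp : p.Prime) (hn : n ≠ 0) :
    ¬ p ∣ n / p ^ padicValNat p n := by
  rw [← Nat.factorization_def n hp]
  exact Nat.not_dvd_ordCompl hp hn

theorem stmt_5 (n : ℕ) (x : Fin n → ℕ) (hx : ∀ i, 0 < x i)
    (hsum : ∑ i, (1 : ℚ) / x i = 1) (p : ℕ) (hp : p.Prime)
    (hdvd : ∃ i, p ∣ x i)
    (α : ℕ) (hα : α = Finset.univ.sup (fun i => padicValNat p (x i)))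
    (S : Finset (Fin n)) (hS : S = Finset.univ.filter (fun i => padicValNat p (x i) = α))
    (hcard : 2 ≤ S.card) :
    ∀ T ∈ S.powersetCard (S.card - 1),
      ¬ (p : ℕ) ∣ ∑ t ∈ T.powersetCard (S.card - 2), ∏ i ∈ t, (x i / p ^ α) := by
  have := Fact.mk hp
  intro T hT
  obtain ⟨hTS, hTcard⟩ := mem_powersetCard.1 hT
  obtain ⟨j, hjT, rfl⟩ := exists_eq_insert_iff.2 ⟨hTS, by omega⟩
  have hTne : T.Nonempty := card_pos.1 (by omega)
  have hmem : ∀ i, i ∈ insert j T ↔ padicValNat p (x i) = α := by simp [hS]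
  have hle : ∀ i, padicValNat p (x i) ≤ α := fun i =>
    hα ▸ le_sup (f := fun i => padicValNat p (x i)) (mem_univ i)
  have hα0 : 0 < α := by
    obtain ⟨i, hi⟩ := hdvd
    exact (one_le_padicValNat_of_dvd (hx i).ne' hi).trans (hle i)
  have hσS := hp.dvd_sum_powersetCard_card_sub_one_prod_div_pow (fun i => (hx i).ne')
    (by simpa only [one_div] using hsum) hα0 (insert_nonempty j T) (fun i => (hmem i).1)
    fun i hi => (hle i).lt_of_ne (mt (hmem i).2 hi)
  rw [card_insert_of_notMem hjT, Nat.add_sub_cancel, sum_powersetCard_card_insert_prod hjT hTne]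
    at hσS
  rw [card_insert_of_notMem hjT, show #T + 1 - 2 = #T - 1 by omega]
  intro hσT
  obtain ⟨i, hi, hpi⟩ :=
    (hp.prime.dvd_finsetProd_iff _).1 ((Nat.dvd_add_left (hσT.mul_left _)).1 hσS)
  rw [← (hmem i).1 (mem_insert_of_mem hi)] at hpi
  exact Nat.not_dvd_div_pow_padicValNat hp (hx i).ne' hpi
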